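/- arXiv:1912.07029 — 10 statements merged into one kernel-verified Lean document; each statement's English description precedes it below -/
import Mathlib

section
/- Let X be an infinite set totally ordered by ≤, regarded as a semigroup under max. The topology on X generated by the sets B_{x,U} = {y ∈ U : y > x}, where U ranges over cofinite subsets of X and x ranges over X together with an adjoined minimum element (so that B for the adjoined minimum is just U itself), is a T₁ topology making max jointly continuous, and it is contained in every T₁ topology on X making max jointly continuous. -/
open Topology

/-- The topology on a linearly ordered set `X` generated by the sets
`B_{x,U} = {y ∈ U : y > x}` for cofinite `U ⊆ X` and `x ∈ X`, together with the
cofinite sets `U` themselves (corresponding to the adjoined minimum element). -/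
def frechetMarkovMax (X : Type*) [LinearOrder X] : TopologicalSpace X :=
  TopologicalSpace.generateFrom
    {V : Set X | ∃ U : Set X, Uᶜ.Finite ∧ (V = U ∨ ∃ x : X, V = {y ∈ U | x < y})}

section aux

variable {X : Type*} [LinearOrder X]

lemma fmm_open_cofinite (U : Set X) (h : Uᶜ.Finite) :
    IsOpen[frechetMarkovMax X] U :=
  TopologicalSpace.GenerateOpen.basic _ ⟨U, h, Or.inl rfl⟩

lemma fmm_open_B (U : Set X) (h : Uᶜ.Finite) (x : X) :
    IsOpen[frechetMarkovMax X] {y ∈ U | x < y} :=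
  TopologicalSpace.GenerateOpen.basic _ ⟨U, h, Or.inr ⟨x, rfl⟩⟩

omit [LinearOrder X] in
lemma fmm_cofinite_union (U : Set X) (h : Uᶜ.Finite) (a : X) : (U ∪ {a})ᶜ.Finite := by
  refine h.subset ?_
  intro z hz
  simp only [Set.mem_compl_iff, Set.mem_union, Set.mem_singleton_iff, not_or] at hz
  exact hz.1

/-- Key combinatorial lemma for continuity of `max`, assuming `a ≤ b`. -/
lemma fmm_key (V : Set X)
    (hV : ∃ U : Set X, Uᶜ.Finite ∧ (V = U ∨ ∃ x : X, V = {y ∈ U | x < y}))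
    (a b : X) (hab : a ≤ b) (h : max a b ∈ V) :
    ∃ u v : Set X, IsOpen[frechetMarkovMax X] u ∧ IsOpen[frechetMarkovMax X] v ∧
      a ∈ u ∧ b ∈ v ∧ ∀ a' ∈ u, ∀ b' ∈ v, max a' b' ∈ V := by
  rw [max_eq_right hab] at h
  obtain ⟨U, hU, rfl | ⟨x, rfl⟩⟩ := hV
  · rcases eq_or_lt_of_le hab with rfl | hlt
    · exact ⟨V, V, fmm_open_cofinite V hU, fmm_open_cofinite V hU, h, h,
        fun a' ha' b' hb' => by
          rcases le_total a' b' with h' | h'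
          · rw [max_eq_right h']; exact hb'
          · rw [max_eq_left h']; exact ha'⟩
    · refine ⟨V ∪ {a}, {y ∈ V | a < y}, fmm_open_cofinite _ (fmm_cofinite_union V hU a),
        fmm_open_B V hU a, by simp, ⟨h, hlt⟩, ?_⟩
      rintro a' (ha' | ha') b' ⟨hb', hab'⟩
      · rcases le_total a' b' with h' | h'
        · rw [max_eq_right h']; exact hb'
        · rw [max_eq_left h']; exact ha'
      · rw [Set.mem_singleton_iff] at ha'
        subst ha'
        rw [max_eq_right hab'.le]; exact hb'
  · obtain ⟨hbU, hxb⟩ := h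
    rcases eq_or_lt_of_le hab with rfl | hlt
    · refine ⟨_, _, fmm_open_B U hU x, fmm_open_B U hU x, ⟨hbU, hxb⟩, ⟨hbU, hxb⟩, ?_⟩
      rintro a' ⟨ha', hxa'⟩ b' ⟨hb', hxb'⟩
      rcases le_total a' b' with h' | h'
      · rw [max_eq_right h']; exact ⟨hb', hxb'⟩
      · rw [max_eq_left h']; exact ⟨ha', hxa'⟩
    · refine ⟨U ∪ {a}, {y ∈ U | max x a < y},
        fmm_open_cofinite _ (fmm_cofinite_union U hU a),
        fmm_open_B U hU (max x a), by simp,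
        ⟨hbU, max_lt hxb hlt⟩, ?_⟩
      rintro a' (ha' | ha') b' ⟨hb', hab'⟩
      · have hxb' : x < b' := lt_of_le_of_lt (le_max_left x a) hab'
        rcases le_total a' b' with h' | h'
        · rw [max_eq_right h']; exact ⟨hb', hxb'⟩
        · rw [max_eq_left h']; exact ⟨ha', lt_of_lt_of_le hxb' h'⟩
      · rw [Set.mem_singleton_iff] at ha'
        subst ha'
        have h1 : a' < b' := lt_of_le_of_lt (le_max_right x a') hab'
        rw [max_eq_right h1.le]
        exact ⟨hb', lt_of_le_of_lt (le_max_left x a') hab'⟩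

end aux

/-- For an infinite linearly ordered set `X` with the semigroup operation `max`,
the topology generated by the sets `B_{x,U}` is a `T₁` topology making `max`
jointly continuous, and it is contained in every `T₁` topology on `X` making
`max` jointly continuous. -/
theorem stmt4 {X : Type*} [LinearOrder X] [Infinite X] :
    @T1Space X (frechetMarkovMax X) ∧
    Continuous[@instTopologicalSpaceProd X X (frechetMarkovMax X) (frechetMarkovMax X),
      frechetMarkovMax X] (fun p : X × X => max p.1 p.2) ∧
    ∀ 𝒮 : TopologicalSpace X, @T1Space X 𝒮 →
      Continuous[@instTopologicalSpaceProd X X 𝒮 𝒮, 𝒮] (fun p : X × X => max p.1 p.2) →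
      ∀ U : Set X, IsOpen[frechetMarkovMax X] U → IsOpen[𝒮] U := by
  refine ⟨?_, ?_, ?_⟩
  · letI := frechetMarkovMax X
    refine ⟨fun a => ?_⟩
    rw [← isOpen_compl_iff]
    exact fmm_open_cofinite _ (by simp)
  · letI := frechetMarkovMax X
    rw [show frechetMarkovMax X = TopologicalSpace.generateFrom _ from rfl,
      continuous_generateFrom_iff]
    intro V hV
    rw [isOpen_prod_iff]
    intro a b hab
    have hab' : max a b ∈ V := hab
    rcases le_total a b with h | h
    · obtain ⟨u, v, hu, hv, hau, hbv, hmax⟩ := fmm_key V hV a b h hab'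
      exact ⟨u, v, hu, hv, hau, hbv, fun ⟨a', b'⟩ ⟨ha', hb'⟩ =>
        (hmax a' ha' b' hb' : max a' b' ∈ V)⟩
    · obtain ⟨v, u, hv, hu, hbv, hau, hmax⟩ := fmm_key V hV b a h
        (show max b a ∈ V by rw [max_comm]; exact hab')
      exact ⟨u, v, hu, hv, hau, hbv, fun ⟨a', b'⟩ ⟨ha', hb'⟩ =>
        (show max a' b' ∈ V by rw [max_comm]; exact hmax b' hb' a' ha')⟩
  · intro 𝒮 hT1 hcont U hU
    letI := 𝒮
    refine hU.mono (le_generateFrom ?_)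
    rintro V ⟨W, hW, rfl | ⟨x, rfl⟩⟩
    · rw [← compl_compl V]; exact hW.isClosed.isOpen_compl
    · have h1 : IsOpen W := by rw [← compl_compl W]; exact hW.isClosed.isOpen_compl
      have h2 : Continuous (fun y : X => max x y) :=
        hcont.comp (continuous_const.prodMk continuous_id)
      have h3 : IsOpen ((fun y : X => max x y) ⁻¹' {x}ᶜ) :=
        (isOpen_compl_singleton).preimage h2
      have h4 : ((fun y : X => max x y) ⁻¹' {x}ᶜ) = {y : X | x < y} := by
        ext y
        simp only [Set.mem_preimage, Set.mem_compl_iff, Set.mem_singleton_iff, Set.mem_setOf_eq]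
        constructor
        · intro hne
          by_contra hle
          exact hne (max_eq_left (not_lt.mp hle))
        · intro hxy hmax
          exact absurd (hmax ▸ le_max_right x y) (not_le.mpr hxy)
      have h5 : {y ∈ W | x < y} = W ∩ {y : X | x < y} := rfl
      rw [h5, ← h4]
      exact h1.inter h3
end

section
/- Let S be a semigroup that is semitopological with respect to a topology 𝒯, and let A ⊆ S. Suppose S has property X with respect to A: for every s ∈ S there exist f_s, g_s ∈ S and t_s ∈ A with s = f_s·t_s·g_s, such that for every neighbourhood B of t_s the set f_s·(B ∩ A)·g_s is a neighbourhood of s. If T is a semitopological semigroup and φ : S → T is a semigroup homomorphism whose restriction to A is continuous, then φ is continuous. -/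
open Topology

/-- Property **X** of a semigroup with a topology, with respect to a subset `A`:
for every `s` there exist `f, g ∈ S` and `t ∈ A` with `s = f * t * g`, such that
for every neighbourhood `B` of `t`, the set `f * (B ∩ A) * g` is a neighbourhood
of `s`. -/
def HasPropertyX {S : Type*} [Mul S] [TopologicalSpace S] (A : Set S) : Prop :=
  ∀ s : S, ∃ f g : S, ∃ t ∈ A, s = f * t * g ∧
    ∀ B ∈ nhds t, (fun b => f * b * g) '' (B ∩ A) ∈ nhds s

/-- If a semitopological semigroup `S` has property **X** with respect to `A ⊆ S`,
`T` is a semitopological semigroup and `φ : S → T` is a homomorphism whose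
restriction to `A` is continuous, then `φ` is continuous. -/
theorem stmt5 {S T : Type*} [Semigroup S] [Semigroup T]
    [TopologicalSpace S] [TopologicalSpace T]
    (hSl : ∀ s : S, Continuous fun x => s * x)
    (hSr : ∀ s : S, Continuous fun x => x * s)
    (hTl : ∀ t : T, Continuous fun x => t * x)
    (hTr : ∀ t : T, Continuous fun x => x * t)
    (A : Set S) (hA : HasPropertyX A)
    (φ : S →ₙ* T) (hφA : ContinuousOn φ A) :
    Continuous φ := by
  rw [continuous_iff_continuousAt]
  intro s
  obtain ⟨f, g, t, htA, hfg, hX⟩ := hA s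
  intro V hV
  -- ψ : T → T, x ↦ φ f * x * φ g is continuous
  have hψ : Continuous fun x : T => φ f * x * φ g :=
    (hTr (φ g)).comp (hTl (φ f))
  have hφs : φ s = φ f * φ t * φ g := by
    rw [hfg, map_mul, map_mul]
  have hV' : (fun x : T => φ f * x * φ g) ⁻¹' V ∈ nhds (φ t) := by
    apply hψ.continuousAt
    show V ∈ nhds (φ f * φ t * φ g)
    rw [← hφs]; exact hV
  have h1 : φ ⁻¹' ((fun x : T => φ f * x * φ g) ⁻¹' V) ∈ nhdsWithin t A :=
    hφA t htA hV'
  rw [mem_nhdsWithin] at h1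
  obtain ⟨U, hUopen, htU, hU⟩ := h1
  have hBnhd := hX U (hUopen.mem_nhds htU)
  rw [Filter.mem_map]
  refine Filter.mem_of_superset hBnhd ?_
  rintro _ ⟨b, hb, rfl⟩
  have := hU hb
  simpa [map_mul] using this
end

section
/- Let S be a topological semigroup with subsemigroups A ≤ T ≤ S. If S has property X with respect to T, and T (with the subspace topology) has property X with respect to A, then S has property X with respect to A. -/
open Topology

/-- Transitivity of property **X**: if a topological semigroup `S` has property
**X** with respect to a subsemigroup `T`, and `T` (with the subspace topology)
has property **X** with respect to `A ⊆ T`, then `S` has property **X** with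
respect to `A`. -/
theorem stmt6 {S : Type*} [Semigroup S] [TopologicalSpace S] [ContinuousMul S]
    (T : Subsemigroup S) (A : Set S) (hAT : A ⊆ (T : Set S))
    (hST : HasPropertyX (T : Set S))
    (hTA : HasPropertyX {t : T | (t : S) ∈ A}) :
    HasPropertyX A := by
  intro s
  obtain ⟨f, g, t, htT, hs, hB⟩ := hST s
  obtain ⟨f', g', a, haA, hta, hB'⟩ := hTA ⟨t, htT⟩
  refine ⟨f * (f' : S), (g' : S) * g, (a : S), haA, ?_, ?_⟩
  · have h1 : t = (f' : S) * a * g' := congrArg Subtype.val hta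
    rw [hs, h1]; simp [mul_assoc]
  · intro B hBn
    have hB'n : (Subtype.val ⁻¹' B : Set T) ∈ nhds a :=
      ContinuousAt.preimage_mem_nhds continuous_subtype_val.continuousAt hBn
    have hC := hB' _ hB'n
    rw [nhds_induced, Filter.mem_comap] at hC
    obtain ⟨U, hU, hUsub⟩ := hC
    refine Filter.mem_of_superset (hB U hU) ?_
    rintro _ ⟨x, ⟨hxU, hxT⟩, rfl⟩
    have hmem : (⟨x, hxT⟩ : T) ∈ (fun b => f' * b * g') ''
        ((Subtype.val ⁻¹' B) ∩ {t : T | (t : S) ∈ A}) := hUsub hxU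
    obtain ⟨b, ⟨hbB, hbA⟩, hb⟩ := hmem
    refine ⟨(b : S), ⟨hbB, hbA⟩, ?_⟩
    have h2 : x = (f' : S) * b * g' := congrArg Subtype.val hb.symm
    rw [h2]; simp [mul_assoc]
end

section
/- A topological monoid M has the right small index property (every right congruence with countably many classes is open) if and only if every monoid homomorphism from M to the full transformation monoid ℕ^ℕ (with the pointwise topology, acting on the right) is continuous. -/
open Topology

/-- The full transformation monoid `ℕ^ℕ`: all maps `ℕ → ℕ`, with functions acting
on the right and composed from left to right, i.e. `(f * g) i = g (f i)`. -/
def TransformationMonoid : Type := ℕ → ℕ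

instance : Monoid TransformationMonoid where
  mul f g := fun i => g (f i)
  one := fun i => i
  mul_assoc _ _ _ := rfl
  one_mul _ := rfl
  mul_one _ := rfl

/-- The pointwise (product) topology on `ℕ^ℕ`, with `ℕ` discrete. -/
instance : TopologicalSpace TransformationMonoid :=
  inferInstanceAs (TopologicalSpace (ℕ → ℕ))

/-!
A homomorphism `φ : M → ℕ^ℕ` is continuous iff each coordinate `m ↦ φ m i` has open fibres, and
these fibres are the classes of a right congruence with countably many classes. Conversely,
`M` acts on the right on the classes of a right congruence `ρ`; numbering the countably many
classes turns this action into a homomorphism `M → ℕ^ℕ`, and the class of `m` is the preimage of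
the basic open set `{f | f [1] = [m]}`.
-/

open MulOpposite Function

namespace TransformationMonoid

lemma continuous_apply (i : ℕ) : Continuous fun f : TransformationMonoid => f i :=
  _root_.continuous_apply (A := fun _ : ℕ => ℕ) i

lemma continuous_iff_continuous_apply {X : Type*} [TopologicalSpace X]
    {φ : X → TransformationMonoid} : Continuous φ ↔ ∀ i, Continuous fun x => φ x i :=
  continuous_pi_iff (A := fun _ : ℕ => ℕ)

variable {M α : Type*} [Monoid M] [MulAction Mᵐᵒᵖ α] {e : α → ℕ}

noncomputable def ofRightAction (he : Injective e) : M →* TransformationMonoid where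
  toFun c := extend e (fun a => e (op c • a)) id
  map_one' := funext fun n => by
    by_cases hn : ∃ a, e a = n
    · obtain ⟨a, rfl⟩ := hn
      rw [he.extend_apply, op_one, one_smul]
      rfl
    · exact extend_apply' _ _ _ hn
  map_mul' c d := funext fun n => by
    change extend e (fun a => e (op (c * d) • a)) id n =
      extend e (fun a => e (op d • a)) id (extend e (fun a => e (op c • a)) id n)
    by_cases hn : ∃ a, e a = n
    · obtain ⟨a, rfl⟩ := hn
      simp only [he.extend_apply, op_mul, mul_smul]
    · simp only [extend_apply' _ _ _ hn, id]

lemma ofRightAction_apply (he : Injective e) (c : M) (a : α) :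
    ofRightAction he c (e a) = e (op c • a) :=
  he.extend_apply (fun a => e (op c • a)) id a

end TransformationMonoid

section RightCongruence

variable {M : Type*} [Monoid M]

def IsRightCongruence (ρ : Setoid M) : Prop :=
  ∀ a b c : M, ρ.r a b → ρ.r (a * c) (b * c)

lemma isRightCongruence_ker_apply (φ : M →* TransformationMonoid) (i : ℕ) :
    IsRightCongruence (Setoid.ker fun m => φ m i) := fun a b c (hab : φ a i = φ b i) => by
  change φ (a * c) i = φ (b * c) i
  rw [map_mul, map_mul]
  exact congrArg (φ c) hab

abbrev IsRightCongruence.mulAction {ρ : Setoid M} (hρ : IsRightCongruence ρ) :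
    MulAction Mᵐᵒᵖ (Quotient ρ) where
  smul c := Quotient.map (· * c.unop) fun a b => hρ a b c.unop
  one_smul q := Quotient.inductionOn q fun a => congrArg (Quotient.mk ρ) (mul_one a)
  mul_smul c d q := Quotient.inductionOn q fun a =>
    congrArg (Quotient.mk ρ) (mul_assoc a d.unop c.unop).symm

variable [TopologicalSpace M]

lemma IsRightCongruence.isOpen_setOf_rel {ρ : Setoid M} (hρ : IsRightCongruence ρ)
    [Countable (Quotient ρ)] (hcont : ∀ φ : M →* TransformationMonoid, Continuous φ) (m : M) :
    IsOpen {x | ρ.r x m} := by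
  let := hρ.mulAction
  obtain ⟨e, he⟩ := countable_iff_exists_injective (Quotient ρ) |>.1 inferInstance
  have hclass : {x | ρ.r x m} =
      (fun x => TransformationMonoid.ofRightAction he x (e ⟦1⟧)) ⁻¹' {e ⟦m⟧} := by
    ext x
    rw [Set.mem_preimage, Set.mem_singleton_iff, TransformationMonoid.ofRightAction_apply]
    change ρ.r x m ↔ e ⟦1 * x⟧ = e ⟦m⟧
    rw [one_mul, he.eq_iff, Quotient.eq]
  rw [hclass]
  exact ((TransformationMonoid.continuous_apply _).comp (hcont _)).isOpen_preimage _
    (isOpen_discrete _)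

end RightCongruence

theorem stmt7_general {M : Type*} [Monoid M] [TopologicalSpace M] :
    (∀ ρ : Setoid M, (∀ a b c : M, ρ.r a b → ρ.r (a * c) (b * c)) →
      Countable (Quotient ρ) → ∀ m : M, IsOpen {x : M | ρ.r x m}) ↔
    (∀ φ : M →* TransformationMonoid, Continuous φ) := by
  refine ⟨fun hsip φ => ?_, fun hcont ρ hρ _ => IsRightCongruence.isOpen_setOf_rel hρ hcont⟩
  refine TransformationMonoid.continuous_iff_continuous_apply.2 fun i => ?_
  have hcount : Countable (Quotient (Setoid.ker fun m => φ m i)) :=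
    (Setoid.kerLift_injective _).countable
  exact (IsLocallyConstant.iff_isOpen_fiber_apply.2
    (hsip _ (isRightCongruence_ker_apply φ i) hcount)).continuous

/-- A topological monoid `M` has the right small index property (every right
congruence with countably many classes has all its classes open) if and only if
every monoid homomorphism from `M` to the full transformation monoid `ℕ^ℕ`, with
the pointwise topology, is continuous. -/
theorem stmt7 {M : Type*} [Monoid M] [TopologicalSpace M] [ContinuousMul M] :
    (∀ ρ : Setoid M, (∀ a b c : M, ρ.r a b → ρ.r (a * c) (b * c)) →
      Countable (Quotient ρ) → ∀ m : M, IsOpen {x : M | ρ.r x m}) ↔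
    (∀ φ : M →* TransformationMonoid, Continuous φ) :=
  stmt7_general
end

section
/- Define a topology 𝒯 on the additive group of real numbers ℝ by taking as a basis all cosets of subgroups of ℝ of countable index. Then 𝒯 is a Hausdorff group topology on (ℝ, +) in which every countable-index subgroup is open, but the identity map from (ℝ, 𝒯) to ℝ with its standard topology is not continuous. -/
/-!
The sum of a point of `a + G` and a point of `b + G` lies in `a + b + G`, and `-(a + G) = -a + G`,
so the cosets of any family of subgroups of an abelian group generate a group topology. As
countable-index subgroups are closed under finite intersections, their cosets form a basis, and
every neighbourhood of `0` contains a countable-index subgroup. Kernels of `ℚ`-linear functionals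
`ℝ → ℚ` have countable index and separate points, so the topology is Hausdorff. But the only
subgroup of `ℝ` inside `(-1, 1)` is `0`, which has uncountable index, so `(-1, 1)` is not open.
-/

open Topology

/-- The topology on `(ℝ, +)` generated by the cosets of all subgroups of
countable index. -/
def cosetTopology : TopologicalSpace ℝ :=
  TopologicalSpace.generateFrom
    {V : Set ℝ | ∃ (G : AddSubgroup ℝ) (x : ℝ),
      Countable (ℝ ⧸ G) ∧ V = {y : ℝ | y - x ∈ G}}

open TopologicalSpace

namespace AddSubgroup

variable {A : Type*}

lemma countable_quotient_inf [AddGroup A] {G H : AddSubgroup A} (hG : Countable (A ⧸ G))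
    (hH : Countable (A ⧸ H)) : Countable (A ⧸ (G ⊓ H)) := by
  have hinj : Function.Injective fun q : A ⧸ (G ⊓ H) =>
      (quotientMapOfLE (inf_le_left : G ⊓ H ≤ G) q,
        quotientMapOfLE (inf_le_right : G ⊓ H ≤ H) q) :=
    Quotient.ind₂' fun a b h => by
      simp only [Prod.mk.injEq] at h
      exact QuotientAddGroup.eq.2 ⟨QuotientAddGroup.eq.1 h.1, QuotientAddGroup.eq.1 h.2⟩
  exact hinj.countable

lemma eq_bot_of_bddAbove [AddCommGroup A] [LinearOrder A] [IsOrderedAddMonoid A] [Archimedean A]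
    {G : AddSubgroup A} (h : BddAbove (G : Set A)) : G = ⊥ := by
  obtain ⟨a, ha⟩ := h
  refine (eq_bot_iff_forall G).2 fun g hg => by_contra fun hne => ?_
  obtain ⟨g', hg', hpos⟩ : ∃ g' ∈ G, 0 < g' := by
    rcases lt_or_gt_of_ne hne with hneg | hpos
    · exact ⟨-g, G.neg_mem hg, neg_pos.2 hneg⟩
    · exact ⟨g, hg, hpos⟩
  obtain ⟨n, hn⟩ := exists_lt_nsmul hpos a
  exact (ha (G.nsmul_mem hg' n)).not_gt hn

end AddSubgroup

section CosetTopology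

variable {A : Type*} [AddCommGroup A] (P : AddSubgroup A → Prop)

def cosetsOf : Set (Set A) :=
  {V | ∃ (G : AddSubgroup A) (x : A), P G ∧ V = {y | y - x ∈ G}}

variable {P}

lemma setOf_sub_mem_eq {G : AddSubgroup A} {a x : A} (ha : a - x ∈ G) :
    {y | y - x ∈ G} = {y | y - a ∈ G} := by
  ext y
  rw [Set.mem_ofPred_eq, Set.mem_ofPred_eq, ← sub_add_sub_cancel y a x, G.add_mem_cancel_right ha]

lemma isOpen_generateFrom_cosetsOf {G : AddSubgroup A} (hG : P G) (x : A) :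
    IsOpen[generateFrom (cosetsOf P)] {y | y - x ∈ G} :=
  GenerateOpen.basic _ ⟨G, x, hG, rfl⟩

lemma isOpen_generateFrom_cosetsOf_coe {G : AddSubgroup A} (hG : P G) :
    IsOpen[generateFrom (cosetsOf P)] (G : Set A) := by
  simpa using isOpen_generateFrom_cosetsOf hG 0

lemma isTopologicalAddGroup_generateFrom_cosetsOf :
    @IsTopologicalAddGroup A (generateFrom (cosetsOf P)) _ := by
  let := generateFrom (cosetsOf P)
  have hadd : ContinuousAdd A := by
    refine ⟨continuous_generateFrom_iff.2 ?_⟩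
    rintro _ ⟨G, x, hG, rfl⟩
    refine isOpen_prod_iff.2 fun a b hab => ⟨{y | y - a ∈ G}, {y | y - b ∈ G},
      isOpen_generateFrom_cosetsOf hG a, isOpen_generateFrom_cosetsOf hG b,
      by simp, by simp, ?_⟩
    rintro ⟨p, q⟩ ⟨hp, hq⟩
    have hsplit : p + q - x = (p - a) + (q - b) + (a + b - x) := by abel
    simpa only [Set.mem_preimage, Set.mem_ofPred_eq, hsplit] using
      add_mem (add_mem hp hq) hab
  have hneg : ContinuousNeg A := by
    refine ⟨continuous_generateFrom_iff.2 ?_⟩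
    rintro _ ⟨G, x, hG, rfl⟩
    have hpre : Neg.neg ⁻¹' {y | y - x ∈ G} = {y | y - -x ∈ G} := by
      ext y
      rw [Set.mem_preimage, Set.mem_ofPred_eq, Set.mem_ofPred_eq, ← G.neg_mem_iff]
      abel_nf
    rw [hpre]
    exact isOpen_generateFrom_cosetsOf hG (-x)
  exact {}

lemma t2Space_generateFrom_cosetsOf (hsep : ∀ x : A, x ≠ 0 → ∃ G, P G ∧ x ∉ G) :
    @T2Space A (generateFrom (cosetsOf P)) := by
  let := generateFrom (cosetsOf P)
  refine ⟨fun x y hxy => ?_⟩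
  obtain ⟨G, hG, hxyG⟩ := hsep (x - y) (sub_ne_zero.2 hxy)
  refine ⟨{z | z - x ∈ G}, {z | z - y ∈ G}, isOpen_generateFrom_cosetsOf hG x,
    isOpen_generateFrom_cosetsOf hG y, by simp, by simp, Set.disjoint_left.2 fun z hzx hzy => ?_⟩
  exact hxyG (by simpa using G.sub_mem hzy hzx)

lemma isTopologicalBasis_cosetsOf (hinf : ∀ G H, P G → P H → P (G ⊓ H)) (htop : P ⊤) :
    @IsTopologicalBasis A (generateFrom (cosetsOf P)) (cosetsOf P) := by
  let := generateFrom (cosetsOf P)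
  refine IsTopologicalBasis.mk ?_ ?_ rfl
  · rintro _ ⟨G, x₁, hG, rfl⟩ _ ⟨H, x₂, hH, rfl⟩ x ⟨hx₁, hx₂⟩
    refine ⟨{y | y - x ∈ G ⊓ H}, ⟨G ⊓ H, x, hinf G H hG hH, rfl⟩, by simp, ?_⟩
    rw [setOf_sub_mem_eq hx₁, setOf_sub_mem_eq hx₂]
    exact fun y hy => hy
  · exact Set.eq_univ_of_forall fun x => ⟨Set.univ, ⟨⊤, 0, htop, by simp⟩, trivial⟩

lemma exists_subgroup_subset_of_mem_nhds_zero (hinf : ∀ G H, P G → P H → P (G ⊓ H))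
    (htop : P ⊤) {s : Set A} (hs : s ∈ @nhds A (generateFrom (cosetsOf P)) 0) :
    ∃ G, P G ∧ (G : Set A) ⊆ s := by
  let := generateFrom (cosetsOf P)
  obtain ⟨_, ⟨G, x, hG, rfl⟩, h0, hsub⟩ :=
    (isTopologicalBasis_cosetsOf hinf htop).mem_nhds_iff.1 hs
  refine ⟨G, hG, fun g hg => hsub ?_⟩
  rw [setOf_sub_mem_eq h0]
  simpa using hg

end CosetTopology

lemma cosetTopology_eq :
    cosetTopology = generateFrom (cosetsOf fun G : AddSubgroup ℝ => Countable (ℝ ⧸ G)) := rfl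

lemma exists_countable_quotient_notMem {V : Type*} [AddCommGroup V] [Module ℚ V] {v : V}
    (hv : v ≠ 0) : ∃ G : AddSubgroup V, Countable (V ⧸ G) ∧ v ∉ G := by
  obtain ⟨f, hf⟩ := Module.Projective.exists_dual_ne_zero ℚ hv
  exact ⟨f.toAddMonoidHom.ker,
    .of_equiv _ (QuotientAddGroup.quotientKerEquivRange f.toAddMonoidHom).toEquiv.symm, hf⟩

/-- The topology on `ℝ` with basis the cosets of countable-index subgroups is a
Hausdorff group topology in which every countable-index subgroup is open, but the
identity map to `ℝ` with the standard topology is not continuous. -/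
theorem stmt8 :
    @T2Space ℝ cosetTopology ∧
    @IsTopologicalAddGroup ℝ cosetTopology inferInstance ∧
    (∀ G : AddSubgroup ℝ, Countable (ℝ ⧸ G) → IsOpen[cosetTopology] (G : Set ℝ)) ∧
    ¬ Continuous[cosetTopology, inferInstance] (id : ℝ → ℝ) := by
  have hinf : ∀ G H : AddSubgroup ℝ, Countable (ℝ ⧸ G) → Countable (ℝ ⧸ H) →
      Countable (ℝ ⧸ (G ⊓ H)) := fun _ _ => AddSubgroup.countable_quotient_inf
  have htop : Countable (ℝ ⧸ (⊤ : AddSubgroup ℝ)) :=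
    @Subsingleton.to_countable _ QuotientAddGroup.subsingleton_quotient_top
  rw [cosetTopology_eq]
  refine ⟨t2Space_generateFrom_cosetsOf fun _ => exists_countable_quotient_notMem,
    isTopologicalAddGroup_generateFrom_cosetsOf, fun _ hG => isOpen_generateFrom_cosetsOf_coe hG,
    fun hcont => ?_⟩
  have hIoo : Set.Ioo (-1 : ℝ) 1 ∈ @nhds ℝ (generateFrom _) 0 :=
    @IsOpen.mem_nhds ℝ (generateFrom _) _ _
      (@Continuous.isOpen_preimage ℝ ℝ (generateFrom _) _ id hcont _ isOpen_Ioo) (by norm_num)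
  obtain ⟨G, hG, hGsub⟩ := exists_subgroup_subset_of_mem_nhds_zero hinf htop hIoo
  rw [AddSubgroup.eq_bot_of_bddAbove (bddAbove_Ioo.mono hGsub)] at hG
  exact not_countable (hG.of_equiv _ QuotientAddGroup.quotientBot.toEquiv)
end

section
/- The full transformation monoid ℕ^ℕ with the pointwise topology has property X with respect to the symmetric group Sym(ℕ): for every s ∈ ℕ^ℕ there exist f, g ∈ ℕ^ℕ and a permutation t_s ∈ Sym(ℕ) with s = f ∘ t_s ∘ g, such that for every neighbourhood B of t_s, the set f ∘ (B ∩ Sym(ℕ)) ∘ g is a neighbourhood of s in the pointwise topology. -/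
open Topology

/-- The full transformation monoid `ℕ^ℕ`: maps `ℕ → ℕ` with functions acting on
the right, composed from left to right: `(f * g) x = g (f x)`. -/
def Transf : Type := ℕ → ℕ

instance : Semigroup Transf where
  mul f g := fun x => g (f x)
  mul_assoc _ _ _ := rfl

/-- The pointwise (product) topology on `ℕ^ℕ`, with `ℕ` discrete. -/
instance : TopologicalSpace Transf :=
  inferInstanceAs (TopologicalSpace (ℕ → ℕ))

/-- The symmetric group `Sym(ℕ)`, viewed as the set of bijective elements of
`ℕ^ℕ`. -/
def symN : Set Transf := {h : Transf | Function.Bijective (h : ℕ → ℕ)}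

/-!
Encode `ℕ` as `ℕ × ℕ` via `Nat.pair`, take `f x = ⟨x, x⟩`, `g ⟨x, y⟩ = y`, and let `t` swap `x` and
`s x` inside row `x`, so that `g (t (f x)) = s x`. A basic neighbourhood of `t` only pins `t` on
some initial segment `[0, n)`. Given `v` agreeing with `s` below `n`, the diagonal points not yet
pinned can be sent injectively into fresh rows with second coordinates `v x`; since both the
remaining domain and the remaining range are infinite, this partial injection extends to a
permutation `u` near `t` with `f * u * g = v`.
-/

open Function Set

theorem Set.InjOn.exists_equiv_eqOn {α : Type*} [Countable α] {p : α → α} {A : Set α}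
    (hp : InjOn p A) (hA : Aᶜ.Infinite) (hpA : (p '' A)ᶜ.Infinite) :
    ∃ u : α ≃ α, EqOn u p A := by
  have : Infinite ↥Aᶜ := hA.to_subtype
  have : Infinite ↥(p '' A)ᶜ := hpA.to_subtype
  obtain ⟨u, hu⟩ := Cardinal.extend_function (⟨A.domRestrict p, hp.injective⟩ : A ↪ α)
    (Cardinal.eq.1 <| by
      rw [Embedding.coeFn_mk, range_domRestrict, Cardinal.mk_eq_aleph0, Cardinal.mk_eq_aleph0])
  exact ⟨u, fun a ha => hu ⟨a, ha⟩⟩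

theorem PiNat.mem_nhds_iff_exists_cylinder_subset {E : ℕ → Type*}
    [∀ n, TopologicalSpace (E n)] [∀ n, DiscreteTopology (E n)] {x : ∀ n, E n}
    {B : Set (∀ n, E n)} : B ∈ 𝓝 x ↔ ∃ n, PiNat.cylinder x n ⊆ B := by
  refine ⟨fun hB => ?_, fun ⟨n, hn⟩ => Filter.mem_of_superset
    ((PiNat.isOpen_cylinder E x n).mem_nhds (PiNat.self_mem_cylinder x n)) hn⟩
  obtain ⟨_, ⟨y, n, rfl⟩, hx, hsub⟩ := (PiNat.isTopologicalBasis_cylinders E).mem_nhds_iff.1 hB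
  exact ⟨n, PiNat.mem_cylinder_iff_eq.1 hx ▸ hsub⟩

def rowSwap (s : ℕ → ℕ) : ℕ ≃ ℕ :=
  Nat.pairEquiv.symm.trans
    ((Equiv.prodShear (Equiv.refl ℕ) fun x => Equiv.swap x (s x)).trans Nat.pairEquiv)

theorem rowSwap_pair_self (s : ℕ → ℕ) (x : ℕ) : rowSwap s (Nat.pair x x) = Nat.pair x (s x) := by
  simp [rowSwap, Equiv.prodShear]

theorem infinite_compl_Iio_union_range_pair_self (n : ℕ) :
    (Iio n ∪ range fun x => Nat.pair x x)ᶜ.Infinite := by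
  refine infinite_of_injective_forall_mem (f := fun x => Nat.pair (n + x) (n + x + 1)) ?_ ?_
  · intro x y h
    simpa using congrArg (fun m => (Nat.unpair m).1) h
  · rintro x (hx | ⟨y, hy⟩)
    · have := Nat.left_le_pair (n + x) (n + x + 1)
      simp only [mem_Iio] at hx
      omega
    · rw [Nat.pair_eq_pair] at hy
      omega

theorem exists_perm_eqOn_Iio_and_snd_pair_self {t : ℕ → ℕ} (ht : Injective t) {n : ℕ}
    {v : ℕ → ℕ} (hv : ∀ x, Nat.pair x x < n → (Nat.unpair (t (Nat.pair x x))).2 = v x) :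
    ∃ u : ℕ ≃ ℕ, (∀ i < n, u i = t i) ∧ ∀ x, (Nat.unpair (u (Nat.pair x x))).2 = v x := by
  obtain ⟨M, hM⟩ := ((finite_Iio n).image fun i => (Nat.unpair (t i)).1).bddAbove
  -- Rows beyond `M` are untouched by `t` on `Iio n`; row `M + 1` stays outside the range.
  let q : ℕ → ℕ := fun i => Nat.pair (M + 2 + (Nat.unpair i).1) (v (Nat.unpair i).1)
  have hq_fst : ∀ i, (Nat.unpair (q i)).1 = M + 2 + (Nat.unpair i).1 := by simp [q]
  let D : Set ℕ := range (fun x => Nat.pair x x) \ Iio n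
  let p : ℕ → ℕ := (Iio n).piecewise t q
  have hpt : EqOn p t (Iio n) := piecewise_eqOn _ _ _
  have hpq : EqOn p q D := fun i hi => piecewise_eqOn_compl _ _ _ hi.2
  have hinj : InjOn p (Iio n ∪ D) := by
    refine (injOn_union disjoint_sdiff_right).2 ⟨ht.injOn.congr hpt.symm, ?_, ?_⟩
    · refine InjOn.congr ?_ hpq.symm
      rintro _ ⟨⟨x, rfl⟩, -⟩ _ ⟨⟨y, rfl⟩, -⟩ hxy
      simpa [hq_fst] using congrArg (fun m => (Nat.unpair m).1) hxy
    · intro i hi j hj hij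
      have := congrArg (fun m => (Nat.unpair m).1) ((hpt hi).symm.trans (hij.trans (hpq hj)))
      have := hM (mem_image_of_mem _ hi)
      simp only [hq_fst] at *
      omega
  have hcompl : (Iio n ∪ D)ᶜ.Infinite := by
    rw [union_sdiff_self]
    exact infinite_compl_Iio_union_range_pair_self n
  have hrange : (p '' (Iio n ∪ D))ᶜ.Infinite := by
    refine infinite_of_injective_forall_mem (f := Nat.pair (M + 1)) ?_ ?_
    · intro x y h
      simpa using congrArg (fun m => (Nat.unpair m).2) h
    · rintro w ⟨i, hi | hi, h⟩
      · have := congrArg (fun m => (Nat.unpair m).1) ((hpt hi).symm.trans h)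
        have := hM (mem_image_of_mem _ hi)
        simp only [Nat.unpair_pair] at *
        omega
      · have := congrArg (fun m => (Nat.unpair m).1) ((hpq hi).symm.trans h)
        simp only [Nat.unpair_pair, hq_fst] at this
        omega
  obtain ⟨u, hu⟩ := hinj.exists_equiv_eqOn hcompl hrange
  refine ⟨u, fun i hi => (hu (Or.inl hi)).trans (hpt hi), fun x => ?_⟩
  by_cases hx : Nat.pair x x < n
  · rw [hu (Or.inl hx), hpt hx, hv x hx]
  · have hD : Nat.pair x x ∈ D := ⟨⟨x, rfl⟩, hx⟩
    rw [hu (Or.inr hD), hpq hD]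
    simp [q]

/-- `ℕ^ℕ` with the pointwise topology has property **X** with respect to
`Sym(ℕ)`: for every `s ∈ ℕ^ℕ` there are `f, g ∈ ℕ^ℕ` and a permutation `t` with
`s = f * t * g`, such that for every neighbourhood `B` of `t`, the set
`f * (B ∩ Sym(ℕ)) * g` is a neighbourhood of `s`. -/
theorem stmt10 :
    ∀ s : Transf, ∃ f g : Transf, ∃ t ∈ symN, s = f * t * g ∧
      ∀ B ∈ nhds t, (fun b => f * b * g) '' (B ∩ symN) ∈ nhds s := by
  intro s
  have hsnd : ∀ x, (Nat.unpair (rowSwap s (Nat.pair x x))).2 = s x := fun x => by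
    rw [rowSwap_pair_self s x, Nat.unpair_pair]
  refine ⟨fun x => Nat.pair x x, fun n => (Nat.unpair n).2, ⇑(rowSwap s), (rowSwap s).bijective,
    funext fun x => (hsnd x).symm, fun B hB => ?_⟩
  obtain ⟨n, hn⟩ := PiNat.mem_nhds_iff_exists_cylinder_subset.1 hB
  refine PiNat.mem_nhds_iff_exists_cylinder_subset.2 ⟨n, fun v hv => ?_⟩
  obtain ⟨u, hut, huv⟩ := exists_perm_eqOn_Iio_and_snd_pair_self (rowSwap s).injective
    fun x hx => (hsnd x).trans (hv x ((Nat.left_le_pair x x).trans_lt hx)).symm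
  exact ⟨⇑u, ⟨hn hut, u.bijective⟩, funext huv⟩
end

section
/- Let X be an infinite set and let B_X denote the monoid of binary relations on X under relational composition. The topology on B_X generated by the sets U_{x,y} = {f ∈ B_X : (x, y) ∈ f} for x, y ∈ X makes composition of relations jointly continuous, makes the inversion map f ↦ f⁻¹ = {(y, x) : (x, y) ∈ f} continuous, and is T₀ but not T₁. -/
open Topology

/-- Composition of binary relations:
`r ∘ s = {(x, y) : ∃ z, (x, z) ∈ r ∧ (z, y) ∈ s}`. -/
def rcomp {X : Type*} (r s : Set (X × X)) : Set (X × X) :=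
  {p | ∃ z : X, (p.1, z) ∈ r ∧ (z, p.2) ∈ s}

/-- The inverse of a binary relation: `r⁻¹ = {(y, x) : (x, y) ∈ r}`. -/
def rinv {X : Type*} (r : Set (X × X)) : Set (X × X) :=
  {p | (p.2, p.1) ∈ r}

/-- The topology `𝓑₁` on the monoid `B_X` of binary relations on `X`, generated
by the sets `U_{x,y} = {f : (x, y) ∈ f}`. -/
def relTop (X : Type*) : TopologicalSpace (Set (X × X)) :=
  TopologicalSpace.generateFrom
    {V : Set (Set (X × X)) | ∃ x y : X, V = {f : Set (X × X) | (x, y) ∈ f}}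

lemma relTop_isOpen_sub {X : Type*} (x y : X) :
    IsOpen[relTop X] {f : Set (X × X) | (x, y) ∈ f} :=
  TopologicalSpace.isOpen_generateFrom_of_mem ⟨x, y, rfl⟩

lemma relTop_upward {X : Type*} {U : Set (Set (X × X))} (hU : IsOpen[relTop X] U)
    {f g : Set (X × X)} (hfg : f ⊆ g) (hf : f ∈ U) : g ∈ U := by
  induction hU with
  | basic V hV => obtain ⟨x, y, rfl⟩ := hV; exact hfg hf
  | univ => trivial
  | inter V W _ _ ihV ihW => exact ⟨ihV hf.1, ihW hf.2⟩
  | sUnion S _ ih =>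
    obtain ⟨V, hVS, hfV⟩ := hf
    exact ⟨V, hVS, ih V hVS hfV⟩

/-- For an infinite set `X`, the topology on `B_X` generated by the sets
`U_{x,y}` makes relational composition jointly continuous and inversion
continuous, and is `T₀` but not `T₁`. -/
theorem stmt11 {X : Type*} [Infinite X] :
    Continuous[@instTopologicalSpaceProd _ _ (relTop X) (relTop X), relTop X]
      (fun p : Set (X × X) × Set (X × X) => rcomp p.1 p.2) ∧
    Continuous[relTop X, relTop X] (rinv (X := X)) ∧
    @T0Space (Set (X × X)) (relTop X) ∧
    ¬ @T1Space (Set (X × X)) (relTop X) := by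
  letI : TopologicalSpace (Set (X × X)) := relTop X
  refine ⟨?_, ?_, ?_, ?_⟩
  · apply continuous_generateFrom_iff.mpr
    rintro V ⟨x, y, rfl⟩
    have h : (fun p : Set (X × X) × Set (X × X) => rcomp p.1 p.2) ⁻¹'
          {f : Set (X × X) | (x, y) ∈ f}
        = ⋃ z : X, ({f : Set (X × X) | (x, z) ∈ f} ×ˢ {f : Set (X × X) | (z, y) ∈ f}) := by
      ext p
      simp [rcomp, Set.mem_prod]
    rw [h]
    exact isOpen_iUnion fun z => (relTop_isOpen_sub x z).prod (relTop_isOpen_sub z y)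
  · apply continuous_generateFrom_iff.mpr
    rintro V ⟨x, y, rfl⟩
    have h : rinv (X := X) ⁻¹' {f : Set (X × X) | (x, y) ∈ f}
        = {f : Set (X × X) | (y, x) ∈ f} := by
      ext f; simp [rinv]
    rw [h]
    exact relTop_isOpen_sub y x
  · refine ⟨fun f g h => ?_⟩
    ext ⟨x, y⟩
    exact h.mem_open_iff (relTop_isOpen_sub x y)
  · intro h
    have hx : Nonempty X := inferInstance
    obtain ⟨x⟩ := hx
    have hcl : IsClosed {(Set.univ : Set (X × X))} := isClosed_singleton
    have hne : (∅ : Set (X × X)) ∈ ({(Set.univ : Set (X × X))} : Set (Set (X × X)))ᶜ := by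
      simp only [Set.mem_compl_iff, Set.mem_singleton_iff]
      intro he
      have : (x, x) ∈ (∅ : Set (X × X)) := he ▸ Set.mem_univ _
      exact this
    have := relTop_upward hcl.isOpen_compl (Set.empty_subset Set.univ) hne
    exact this rfl
end

section
/- Let X be an infinite set and let B_X be the monoid of binary relations on X under composition. The topology generated by the sets U_{x,y} = {h : (x,y) ∈ h} and V_{Y,Z} = {h : the image of Y under h is contained in Z} for x, y ∈ X and Y, Z ⊆ X is a Hausdorff topology making composition of relations jointly continuous and making inversion f ↦ f⁻¹ continuous. -/
open Topology

/-- The topology `𝓑₂` on the monoid `B_X` of binary relations, generated by the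
sets `U_{x,y} = {h : (x,y) ∈ h}` and `V_{Y,Z} = {h : (Y)h ⊆ Z}`. -/
def relTop₂ (X : Type*) : TopologicalSpace (Set (X × X)) :=
  TopologicalSpace.generateFrom
    ({V : Set (Set (X × X)) | ∃ x y : X, V = {f : Set (X × X) | (x, y) ∈ f}} ∪
     {V : Set (Set (X × X)) | ∃ Y Z : Set X,
        V = {f : Set (X × X) | ∀ p ∈ f, p.1 ∈ Y → p.2 ∈ Z}})

section Aux

variable {X : Type*}

private def Uset (x y : X) : Set (Set (X × X)) := {f | (x, y) ∈ f}

private def Vset (Y Z : Set X) : Set (Set (X × X)) :=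
  {f | ∀ p ∈ f, p.1 ∈ Y → p.2 ∈ Z}

private lemma isOpen_U (x y : X) : IsOpen[relTop₂ X] (Uset x y) :=
  TopologicalSpace.GenerateOpen.basic _ (Or.inl ⟨x, y, rfl⟩)

private lemma isOpen_V (Y Z : Set X) : IsOpen[relTop₂ X] (Vset Y Z) :=
  TopologicalSpace.GenerateOpen.basic _ (Or.inr ⟨Y, Z, rfl⟩)

private lemma sep {f g : Set (X × X)} {p : X × X} (hf : p ∈ f) (hg : p ∉ g) :
    ∃ u v : Set (Set (X × X)), IsOpen[relTop₂ X] u ∧ IsOpen[relTop₂ X] v ∧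
      f ∈ u ∧ g ∈ v ∧ Disjoint u v := by
  refine ⟨Uset p.1 p.2, Vset {p.1} {p.2}ᶜ, isOpen_U _ _, isOpen_V _ _, hf, ?_, ?_⟩
  · intro q hq h1
    simp only [Set.mem_singleton_iff] at h1
    simp only [Set.mem_compl_iff, Set.mem_singleton_iff]
    intro h2
    exact hg (by rwa [show q = p from Prod.ext h1 h2] at hq)
  · rw [Set.disjoint_left]
    intro h hu hv
    exact hv p hu rfl rfl

end Aux

/-- For an infinite set `X`, the topology on `B_X` generated by the sets
`U_{x,y}` and `V_{Y,Z}` is Hausdorff, makes relational composition jointly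
continuous, and makes inversion continuous. -/
theorem stmt12 {X : Type*} [Infinite X] :
    @T2Space (Set (X × X)) (relTop₂ X) ∧
    Continuous[@instTopologicalSpaceProd _ _ (relTop₂ X) (relTop₂ X), relTop₂ X]
      (fun p : Set (X × X) × Set (X × X) => rcomp p.1 p.2) ∧
    Continuous[relTop₂ X, relTop₂ X] (rinv (X := X)) := by
  letI : TopologicalSpace (Set (X × X)) := relTop₂ X
  refine ⟨?_, ?_, ?_⟩
  · constructor
    intro f g hfg
    have hex : ∃ p, (p ∈ f ∧ p ∉ g) ∨ (p ∉ f ∧ p ∈ g) := by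
      by_contra h
      push_neg at h
      exact hfg (Set.ext fun p => ⟨fun hp => (h p).1 hp,
        fun hp => by by_contra hnf; exact (h p).2 hnf hp⟩)
    obtain ⟨p, ⟨hpf, hpg⟩ | ⟨hpf, hpg⟩⟩ := hex
    · obtain ⟨u, v, hu, hv, hfu, hgv, hd⟩ := sep hpf hpg
      exact ⟨u, v, hu, hv, hfu, hgv, hd⟩
    · obtain ⟨u, v, hu, hv, hgu, hfv, hd⟩ := sep hpg hpf
      exact ⟨v, u, hv, hu, hfv, hgu, hd.symm⟩
  · rw [show relTop₂ X = TopologicalSpace.generateFrom _ from rfl,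
      continuous_generateFrom_iff]
    rintro s (⟨x, y, rfl⟩ | ⟨Y, Z, rfl⟩)
    · have heq : (fun p : Set (X × X) × Set (X × X) => rcomp p.1 p.2) ⁻¹'
          {f : Set (X × X) | (x, y) ∈ f} = ⋃ z : X, (Uset x z) ×ˢ (Uset z y) := by
        ext ⟨f, g⟩
        simp only [Set.mem_preimage, Set.mem_setOf_eq, Set.mem_iUnion, Set.mem_prod,
          rcomp, Uset]
      rw [heq]
      exact isOpen_iUnion fun z => (isOpen_U x z).prod (isOpen_U z y)
    · have heq : (fun p : Set (X × X) × Set (X × X) => rcomp p.1 p.2) ⁻¹'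
          {f : Set (X × X) | ∀ p ∈ f, p.1 ∈ Y → p.2 ∈ Z} =
          ⋃ W : Set X, (Vset Y W) ×ˢ (Vset W Z) := by
        ext ⟨f, g⟩
        simp only [Set.mem_preimage, Set.mem_setOf_eq, Set.mem_iUnion, Set.mem_prod]
        constructor
        · intro h
          refine ⟨{b | ∃ a ∈ Y, (a, b) ∈ f}, fun p hp hp1 => ⟨p.1, hp1, hp⟩,
            fun q hq hq1 => ?_⟩
          obtain ⟨a, haY, haf⟩ := hq1
          exact h (a, q.2) ⟨q.1, haf, hq⟩ haY
        · rintro ⟨W, hf, hg⟩ p ⟨z, hpf, hpg⟩ hpY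
          exact hg (z, p.2) hpg (hf (p.1, z) hpf hpY)
      rw [heq]
      exact isOpen_iUnion fun W => (isOpen_V Y W).prod (isOpen_V W Z)
  · rw [show relTop₂ X = TopologicalSpace.generateFrom _ from rfl,
      continuous_generateFrom_iff]
    rintro s (⟨x, y, rfl⟩ | ⟨Y, Z, rfl⟩)
    · exact isOpen_U y x
    · have heq : rinv (X := X) ⁻¹' {f : Set (X × X) | ∀ p ∈ f, p.1 ∈ Y → p.2 ∈ Z} =
          Vset Zᶜ Yᶜ := by
        ext f
        simp only [Set.mem_preimage, Set.mem_setOf_eq, Vset, rinv,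
          Set.mem_compl_iff]
        constructor
        · intro h p hp hpZ hpY
          exact hpZ (h (p.2, p.1) hp hpY)
        · intro h p hp hpY
          by_contra hpZ
          exact h (p.2, p.1) hp hpZ hpY
      rw [heq]
      exact isOpen_V _ _
end

section
/- Let ρ be a Vagner-Preston right congruence on an inverse monoid S with identity 1. If f, g ∈ S satisfy f·f⁻¹/ρ ≠ 1/ρ and g·g⁻¹/ρ ≠ 1/ρ (the ρ-classes of f·f⁻¹ and of g·g⁻¹ both differ from that of the identity), then f/ρ = g/ρ. -/
section Aux

variable {S : Type*} [Monoid S]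

private lemma inv_of_idem (i : S → S)
    (huniq : ∀ x y : S, x * y * x = x → y * x * y = y → y = i x)
    {e : S} (he : e * e = e) : i e = e := by
  have h : e * e * e = e := by rw [he, he]
  exact (huniq e e h h).symm

private lemma prod_idem (i : S → S)
    (hinv : ∀ x : S, x * i x * x = x ∧ i x * x * i x = i x)
    (huniq : ∀ x y : S, x * y * x = x → y * x * y = y → y = i x)
    {e f : S} (he : e * e = e) (hf : f * f = f) :
    (e * f) * (e * f) = e * f := by
  set x := i (e * f) with hx
  have h1 : (e * f) * x * (e * f) = e * f := (hinv (e * f)).1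
  have h2 : x * (e * f) * x = x := (hinv (e * f)).2
  have key1 : (e * f) * (f * x * e) * (e * f) = e * f := by
    have : (e * f) * (f * x * e) * (e * f) = e * (f * f) * x * (e * e) * f := by
      simp [mul_assoc]
    rw [this, hf, he]
    calc e * f * x * e * f = (e * f) * x * (e * f) := by simp [mul_assoc]
      _ = e * f := h1
  have key2 : (f * x * e) * (e * f) * (f * x * e) = f * x * e := by
    have : (f * x * e) * (e * f) * (f * x * e) = f * (x * ((e * e) * (f * f)) * x) * e := by
      simp [mul_assoc]
    rw [this, he, hf, h2]
  have hfxe : f * x * e = x := huniq (e * f) (f * x * e) key1 key2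
  have hxx : x * x = x := by
    have : x * x = (f * x * e) * (f * x * e) := by rw [hfxe]
    rw [this]
    have h3 : (f * x * e) * (f * x * e) = f * (x * (e * f) * x) * e := by
      simp [mul_assoc]
    rw [h3, h2, hfxe]
  have hefx : e * f = i x := huniq x (e * f) h2 h1
  rw [hefx, inv_of_idem i huniq hxx, hxx]

private lemma idem_comm (i : S → S)
    (hinv : ∀ x : S, x * i x * x = x ∧ i x * x * i x = i x)
    (huniq : ∀ x y : S, x * y * x = x → y * x * y = y → y = i x)
    {e f : S} (he : e * e = e) (hf : f * f = f) :
    e * f = f * e := by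
  have hef : (e * f) * (e * f) = e * f := prod_idem i hinv huniq he hf
  have hfe : (f * e) * (f * e) = f * e := prod_idem i hinv huniq hf he
  have k1 : (e * f) * (f * e) * (e * f) = e * f := by
    have : (e * f) * (f * e) * (e * f) = (e * (f * f)) * ((e * e) * f) := by
      simp [mul_assoc]
    rw [this, hf, he]
    exact hef
  have k2 : (f * e) * (e * f) * (f * e) = f * e := by
    have : (f * e) * (e * f) * (f * e) = (f * (e * e)) * ((f * f) * e) := by
      simp [mul_assoc]
    rw [this, he, hf]
    exact hfe
  have : f * e = i (e * f) := huniq (e * f) (f * e) k1 k2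
  rw [this, inv_of_idem i huniq hef]

end Aux

/-- Let `S` be an inverse monoid with inversion `i`, and let `ρ` be a
Vagner-Preston right congruence on `S`. If `f·f⁻¹/ρ ≠ 1/ρ` and `g·g⁻¹/ρ ≠ 1/ρ`,
then `f/ρ = g/ρ`. -/
theorem stmt15 {S : Type*} [Monoid S] (i : S → S)
    (hinv : ∀ x : S, x * i x * x = x ∧ i x * x * i x = i x)
    (huniq : ∀ x y : S, x * y * x = x → y * x * y = y → y = i x)
    (ρ : Setoid S)
    (hright : ∀ a b c : S, ρ.r a b → ρ.r (a * c) (b * c))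
    (hVP : ∀ s : S, (∀ t : S, ρ.r t s → ρ.r (t * i t) 1) ∨ (∀ t : S, ρ.r (s * t) s))
    (f g : S) (hf : ¬ ρ.r (f * i f) 1) (hg : ¬ ρ.r (g * i g) 1) :
    ρ.r f g := by
  have hfA : ∀ t : S, ρ.r (f * t) f := by
    rcases hVP f with h | h
    · exact absurd (h f (ρ.refl f)) hf
    · exact h
  have hgA : ∀ t : S, ρ.r (g * t) g := by
    rcases hVP g with h | h
    · exact absurd (h g (ρ.refl g)) hg
    · exact h
  set e := f * i f with he_def
  set e' := g * i g with he'_def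
  have he : e * e = e := by
    have h1 : f * i f * f = f := (hinv f).1
    calc e * e = (f * i f * f) * i f := by simp [he_def, mul_assoc]
      _ = f * i f := by rw [h1]
  have he' : e' * e' = e' := by
    have h1 : g * i g * g = g := (hinv g).1
    calc e' * e' = (g * i g * g) * i g := by simp [he'_def, mul_assoc]
      _ = g * i g := by rw [h1]
  have hA1 : ρ.r (e * e') f := by
    have := hfA (i f * (g * i g))
    have heq : f * (i f * (g * i g)) = e * e' := by simp [he_def, he'_def, mul_assoc]
    rwa [heq] at this
  have hA2 : ρ.r (e' * e) g := by
    have := hgA (i g * (f * i f))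
    have heq : g * (i g * (f * i f)) = e' * e := by simp [he_def, he'_def, mul_assoc]
    rwa [heq] at this
  have hcomm : e * e' = e' * e := idem_comm i hinv huniq he he'
  rw [hcomm] at hA1
  exact ρ.trans (ρ.symm hA1) hA2
end

section
/- Let S be a semitopological inverse monoid (an inverse monoid with a topology making all left and right translations continuous) and let ρ be an open Vagner-Preston right congruence on S. If a ∈ S satisfies a·a⁻¹/ρ = 1/ρ, then the set {f ∈ S : a/ρ = a·f·f⁻¹/ρ} is clopen in S. -/
section Aux
variable {S : Type*} [Monoid S] (i : S → S)
    (hinv : ∀ x : S, x * i x * x = x ∧ i x * x * i x = i x)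
    (huniq : ∀ x y : S, x * y * x = x → y * x * y = y → y = i x)

include hinv huniq

/-- the product of two idempotents is idempotent -/
lemma aux_idem_mul (e g : S) (he : e * e = e) (hg : g * g = g) :
    (e * g) * (e * g) = e * g := by
  set x := i (e * g) with hx
  obtain ⟨h1, h2⟩ := hinv (e * g)
  have he' : ∀ z : S, e * (e * z) = e * z := fun z => by rw [← mul_assoc, he]
  have hg' : ∀ z : S, g * (g * z) = g * z := fun z => by rw [← mul_assoc, hg]
  have h2' : ∀ z : S, x * (e * (g * (x * z))) = x * z := by
    intro z
    have := congrArg (· * z) h2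
    simpa [mul_assoc] using this
  have hy : g * x * e = x := by
    refine huniq (e * g) (g * x * e) ?_ ?_
    · calc e * g * (g * x * e) * (e * g)
          = e * (g * (g * (x * (e * (e * g))))) := by simp [mul_assoc]
        _ = e * (g * (x * (e * g))) := by rw [hg', he']
        _ = e * g := by simpa [mul_assoc] using h1
    · calc g * x * e * (e * g) * (g * x * e)
          = g * (x * (e * (e * (g * (g * (x * e)))))) := by simp [mul_assoc]
        _ = g * (x * (e * (g * (x * e)))) := by rw [he', hg']
        _ = g * (x * e) := by rw [h2']
        _ = g * x * e := by rw [mul_assoc]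
  have hxx : x * x = x := by
    calc x * x = (g * x * e) * (g * x * e) := by rw [hy]
      _ = g * (x * (e * (g * (x * e)))) := by simp [mul_assoc]
      _ = g * (x * e) := by rw [h2']
      _ = x := by rw [← mul_assoc, hy]
  have hix : i x = x := (huniq x x (by rw [hxx, hxx]) (by rw [hxx, hxx])).symm
  have heg : e * g = x := by
    have : e * g = i (i (e * g)) :=
      (huniq (i (e * g)) (e * g) (hinv (e * g)).2 (hinv (e * g)).1)
    rw [this, ← hx, hix]
  rw [heg, hxx]

/-- idempotents commute -/
lemma aux_idem_comm (e g : S) (he : e * e = e) (hg : g * g = g) :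
    e * g = g * e := by
  have heg := aux_idem_mul i hinv huniq e g he hg
  have hge := aux_idem_mul i hinv huniq g e hg he
  have hix : ∀ u : S, u * u = u → i u = u := fun u hu =>
    (huniq u u (by rw [hu, hu]) (by rw [hu, hu])).symm
  have h1 : g * e = i (e * g) := by
    refine huniq (e * g) (g * e) ?_ ?_
    · calc e * g * (g * e) * (e * g)
          = (e * (g * g)) * ((e * e) * g) := by simp [mul_assoc]
        _ = (e * g) * (e * g) := by rw [hg, he]
        _ = e * g := heg
    · calc g * e * (e * g) * (g * e)
          = (g * (e * e)) * ((g * g) * e) := by simp [mul_assoc]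
        _ = (g * e) * (g * e) := by rw [he, hg]
        _ = g * e := hge
  rw [h1, hix (e * g) heg]

/-- `i` is antimultiplicative -/
lemma aux_inv_mul (x y : S) : i (x * y) = i y * i x := by
  have hE : (y * i y) * (y * i y) = y * i y := by
    calc (y * i y) * (y * i y) = (y * i y * y) * i y := by simp [mul_assoc]
      _ = y * i y := by rw [(hinv y).1]
  have hF : (i x * x) * (i x * x) = i x * x := by
    calc (i x * x) * (i x * x) = (i x * x * i x) * x := by simp [mul_assoc]
      _ = i x * x := by rw [(hinv x).2]
  have hcomm := aux_idem_comm i hinv huniq (y * i y) (i x * x) hE hF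
  refine (huniq (x * y) (i y * i x) ?_ ?_).symm
  · calc x * y * (i y * i x) * (x * y)
        = x * ((y * i y) * (i x * x)) * y := by simp [mul_assoc]
      _ = x * ((i x * x) * (y * i y)) * y := by rw [hcomm]
      _ = (x * i x * x) * (y * i y * y) := by simp [mul_assoc]
      _ = x * y := by rw [(hinv x).1, (hinv y).1]
  · calc i y * i x * (x * y) * (i y * i x)
        = i y * ((i x * x) * (y * i y)) * i x := by simp [mul_assoc]
      _ = i y * ((y * i y) * (i x * x)) * i x := by rw [hcomm]
      _ = (i y * y * i y) * (i x * x * i x) := by simp [mul_assoc]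
      _ = i y * i x := by rw [(hinv y).2, (hinv x).2]

end Aux

open Topology

/-- Let `S` be a semitopological inverse monoid (inversion `i`) and let `ρ` be an
open Vagner-Preston right congruence on `S`. If `a ∈ S` satisfies
`a·a⁻¹/ρ = 1/ρ`, then the set `{f ∈ S : a/ρ = a·f·f⁻¹/ρ}` is clopen. -/
theorem stmt16 {S : Type*} [Monoid S] [TopologicalSpace S]
    (hl : ∀ s : S, Continuous fun x => s * x)
    (hr : ∀ s : S, Continuous fun x => x * s)
    (i : S → S)
    (hinv : ∀ x : S, x * i x * x = x ∧ i x * x * i x = i x)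
    (huniq : ∀ x y : S, x * y * x = x → y * x * y = y → y = i x)
    (ρ : Setoid S)
    (hright : ∀ a b c : S, ρ.r a b → ρ.r (a * c) (b * c))
    (hopen : ∀ s : S, IsOpen {x : S | ρ.r x s})
    (hVP : ∀ s : S, (∀ t : S, ρ.r t s → ρ.r (t * i t) 1) ∨ (∀ t : S, ρ.r (s * t) s))
    (a : S) (ha : ρ.r (a * i a) 1) :
    IsClopen {f : S | ρ.r (a * f * i f) a} := by
  -- the saturated set
  set A : Set S := {g : S | ρ.r (g * i g) 1} with hA
  have hsat : ∀ g g' : S, ρ.r g g' → ρ.r (g * i g) 1 → ρ.r (g' * i g') 1 := by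
    intro g g' hgg' hg1
    rcases hVP g with h | h
    · exact h g' (ρ.symm hgg')
    · have hgc : ∀ c : S, ρ.r (g' * c) 1 := fun c =>
        ρ.trans (ρ.symm (hright g g' c hgg'))
          (ρ.trans (h c) (ρ.trans (ρ.symm (h (i g))) hg1))
      exact hgc (i g')
  have hAopen : IsOpen A := by
    have : A = ⋃ s ∈ A, {x : S | ρ.r x s} := by
      ext x
      simp only [Set.mem_iUnion, Set.mem_setOf_eq]
      constructor
      · intro hx; exact ⟨x, hx, ρ.refl x⟩
      · rintro ⟨s, hs, hxs⟩; exact hsat s x (ρ.symm hxs) hs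
    rw [this]
    exact isOpen_biUnion fun s _ => hopen s
  have hAcopen : IsOpen Aᶜ := by
    have : Aᶜ = ⋃ s ∈ Aᶜ, {x : S | ρ.r x s} := by
      ext x
      simp only [Set.mem_iUnion, Set.mem_setOf_eq, Set.mem_compl_iff]
      constructor
      · intro hx; exact ⟨x, hx, ρ.refl x⟩
      · rintro ⟨s, hs, hxs⟩ hx; exact hs (hsat x s hxs hx)
    rw [this]
    exact isOpen_biUnion fun s _ => hopen s
  have hAclopen : IsClopen A := ⟨isOpen_compl_iff.mp hAcopen, hAopen⟩
  -- the target set is the preimage of A under left translation by a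
  have hkey : {f : S | ρ.r (a * f * i f) a} = (fun f => a * f) ⁻¹' A := by
    ext f
    simp only [Set.mem_setOf_eq, Set.mem_preimage, hA, aux_inv_mul i hinv huniq a f]
    have hE : (f * i f) * (f * i f) = f * i f := by
      calc (f * i f) * (f * i f) = (f * i f * f) * i f := by simp [mul_assoc]
        _ = f * i f := by rw [(hinv f).1]
    have hF : (i a * a) * (i a * a) = i a * a := by
      calc (i a * a) * (i a * a) = (i a * a * i a) * a := by simp [mul_assoc]
        _ = i a * a := by rw [(hinv a).2]
    have hcomm := aux_idem_comm i hinv huniq (f * i f) (i a * a) hE hF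
    have habs : a * f * i f * i a * a = a * f * i f := by
      calc a * f * i f * i a * a = a * ((f * i f) * (i a * a)) := by simp [mul_assoc]
        _ = a * ((i a * a) * (f * i f)) := by rw [hcomm]
        _ = (a * i a * a) * (f * i f) := by simp [mul_assoc]
        _ = a * f * i f := by rw [(hinv a).1, ← mul_assoc]
    constructor
    · intro h
      have h2 : ρ.r (a * f * i f * i a) (a * i a) := hright _ _ _ h
      have : a * f * (i f * i a) = a * f * i f * i a := by rw [← mul_assoc]
      rw [this]
      exact ρ.trans h2 ha
    · intro h
      have h2 : ρ.r (a * f * (i f * i a) * a) (1 * a) := hright _ _ _ h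
      rw [one_mul] at h2
      have : a * f * (i f * i a) * a = a * f * i f := by
        rw [← mul_assoc, habs]
      rw [this] at h2
      exact h2
  rw [hkey]
  exact hAclopen.preimage (hl a)
end
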